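/- arXiv:2311.02677 — 2 statements merged into one kernel-verified Lean document; each statement's English description precedes it below -/
import Mathlib

section
/- Let T be an n×n real symmetric tridiagonal matrix, let W be orthogonal with W^T T W = diag(λ_1,...,λ_n), and suppose every entry of the first row of W equals 1/√n. If M_1 = T(2:n,2:n) denotes T with first row and column deleted, then p_{M_1}(x) = (1/n) p_T'(x) for all real x. -/
/-!
Write `T = W Λ Wᵀ` with `Λ = diag(λ)`. Then `adj(xI - T) = W adj(xI - Λ) Wᵀ`, and `adj(xI - Λ)` is
diagonal with entries `∏_{j ≠ k} (x - λⱼ)`. The `(0,0)` entry of `adj(xI - T)` is `p_{M_1}`, so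
`p_{M_1} = ∑ₖ W₀ₖ² ∏_{j ≠ k} (x - λⱼ)`, and with `W₀ₖ² = 1/(n+1)` the sum is `p_T' / (n+1)`.
-/

open Polynomial Matrix

lemma Polynomial.derivative_prod_X_sub_C {ι R : Type*} [CommRing R] [DecidableEq ι]
    (s : Finset ι) (f : ι → R) :
    derivative (∏ i ∈ s, (X - C (f i))) = ∑ i ∈ s, ∏ j ∈ s.erase i, (X - C (f j)) := by
  simp_rw [derivative_prod_finset, derivative_X_sub_C, mul_one]

namespace Matrix

variable {ι R : Type*} [Fintype ι] [DecidableEq ι] [CommRing R]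

lemma map_mul_map_eq_one {S : Type*} [Semiring S] (f : R →+* S) {A B : Matrix ι ι R}
    (h : A * B = 1) : A.map f * B.map f = 1 := by
  rw [← Matrix.map_mul, h, Matrix.map_one f f.map_zero f.map_one]

lemma adjugate_eq_det_smul_of_mul_eq_one {A B : Matrix ι ι R} (h : A * B = 1) :
    adjugate A = A.det • B := by
  calc adjugate A = adjugate A * (A * B) := by rw [h, Matrix.mul_one]
    _ = A.det • B := by rw [← Matrix.mul_assoc, adjugate_mul, smul_mul, Matrix.one_mul]

lemma adjugate_conj {W V : Matrix ι ι R} (hVW : V * W = 1) (A : Matrix ι ι R) :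
    adjugate (W * A * V) = W * adjugate A * V := by
  have hWV : W * V = 1 := mul_eq_one_comm.mp hVW
  rw [adjugate_mul_distrib, adjugate_mul_distrib, adjugate_eq_det_smul_of_mul_eq_one hWV,
    adjugate_eq_det_smul_of_mul_eq_one hVW]
  simp only [Matrix.smul_mul, Matrix.mul_smul, smul_smul, Matrix.mul_assoc]
  rw [← det_mul, hWV, det_one, one_smul]

lemma charmatrix_conj {W V : Matrix ι ι R} (hWV : W * V = 1) (A : Matrix ι ι R) :
    charmatrix (W * A * V) = W.map C * charmatrix A * V.map C := by
  simp only [charmatrix, Matrix.mul_sub, Matrix.sub_mul, _root_.map_mul, RingHom.mapMatrix_apply]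
  rw [scalar_apply, ← smul_one_eq_diagonal, Matrix.mul_smul, Matrix.smul_mul, Matrix.mul_one,
    map_mul_map_eq_one C hWV]

lemma charpoly_conj {W V : Matrix ι ι R} (hVW : V * W = 1) (A : Matrix ι ι R) :
    (W * A * V).charpoly = A.charpoly := by
  rw [charpoly_mul_comm, ← Matrix.mul_assoc, hVW, Matrix.one_mul]

lemma mul_diagonal_mul_apply {α : Type*} [CommSemiring α] (W V : Matrix ι ι α) (d : ι → α)
    (i j : ι) : (W * diagonal d * V) i j = ∑ k, W i k * d k * V k j := by
  rw [mul_apply]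
  simp only [mul_diagonal]

lemma charmatrix_submatrix {κ : Type*} [Fintype κ] [DecidableEq κ] (M : Matrix ι ι R)
    {e : κ → ι} (he : Function.Injective e) :
    charmatrix (M.submatrix e e) = (charmatrix M).submatrix e e := by
  ext i j : 1
  rcases eq_or_ne i j with rfl | hij
  · simp
  · simp [charmatrix_apply_ne _ _ _ hij, charmatrix_apply_ne _ _ _ (he.ne hij)]

lemma charpoly_submatrix_succ {n : ℕ} (M : Matrix (Fin (n + 1)) (Fin (n + 1)) R) :
    (M.submatrix Fin.succ Fin.succ).charpoly = adjugate (charmatrix M) 0 0 := by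
  rw [charpoly, charmatrix_submatrix M (Fin.succ_injective n),
    adjugate_fin_succ_eq_det_submatrix]
  simp

lemma adjugate_charmatrix_conj_diagonal_apply {W V : Matrix ι ι R} (hVW : V * W = 1)
    (lam : ι → R) (i : ι) :
    adjugate (charmatrix (W * diagonal lam * V)) i i =
      ∑ k, C (W i k * V k i) * ∏ j ∈ Finset.univ.erase k, (X - C (lam j)) := by
  rw [charmatrix_conj (mul_eq_one_comm.mp hVW), charmatrix_diagonal,
    adjugate_conj (map_mul_map_eq_one C hVW), adjugate_diagonal, mul_diagonal_mul_apply]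
  refine Finset.sum_congr rfl fun k _ => ?_
  simp only [map_apply, C_mul]
  ring

end Matrix

theorem stmt4_general (n : ℕ) (T W : Matrix (Fin (n + 1)) (Fin (n + 1)) ℝ)
    (lam : Fin (n + 1) → ℝ)
    (hW : Wᵀ * W = 1) (hTW : Wᵀ * T * W = Matrix.diagonal lam)
    (hrow : ∀ j, W 0 j = 1 / Real.sqrt (n + 1)) :
    (T.submatrix Fin.succ Fin.succ).charpoly =
      ((n + 1 : ℝ))⁻¹ • derivative T.charpoly := by
  have hWWt : W * Wᵀ = 1 := mul_eq_one_comm.mp hW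
  have hT : T = W * diagonal lam * Wᵀ := by
    rw [← hTW, ← Matrix.mul_assoc, ← Matrix.mul_assoc, hWWt, Matrix.one_mul, Matrix.mul_assoc,
      hWWt, Matrix.mul_one]
  have hweight : ∀ k, W 0 k * Wᵀ k 0 = ((n + 1 : ℝ))⁻¹ := fun k => by
    rw [transpose_apply, hrow, div_mul_div_comm, one_mul, Real.mul_self_sqrt (by positivity),
      one_div]
  rw [charpoly_submatrix_succ, hT, adjugate_charmatrix_conj_diagonal_apply hW, charpoly_conj hW,
    charpoly_diagonal, derivative_prod_X_sub_C, Finset.smul_sum]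
  simp only [hweight, smul_eq_C_mul]

theorem stmt4 (n : ℕ) (T W : Matrix (Fin (n + 1)) (Fin (n + 1)) ℝ)
    (hTsymm : T.IsSymm)
    (hTtri : ∀ i j : Fin (n + 1), (i : ℕ) + 2 ≤ (j : ℕ) → T i j = 0)
    (lam : Fin (n + 1) → ℝ) (hdist : Function.Injective lam)
    (hW : Wᵀ * W = 1) (hTW : Wᵀ * T * W = Matrix.diagonal lam)
    (hrow : ∀ j, W 0 j = 1 / Real.sqrt (n + 1)) :
    (T.submatrix Fin.succ Fin.succ).charpoly =
      ((n + 1 : ℝ))⁻¹ • derivative T.charpoly :=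
  stmt4_general n T W lam hW hTW hrow
end

section
/- Let λ_1 < ... < λ_n be distinct reals and let T be any real symmetric unreduced tridiagonal matrix with these eigenvalues, diagonalized as W^T T W = diag(λ_1,...,λ_n) with W orthogonal and first row of W equal to e^T/√n. Then the characteristic polynomial of T is p(x) = ∏_{i=1}^n (x - λ_i), and the characteristic polynomial of T(2:n,2:n) is p'(x)/n. -/
/-!
From `Wᵀ T W = diag(λ)` we get `T = W diag(λ) Wᵀ`, hence `charpoly T = ∏ (X - λᵢ)` and
`adj(X - T) = W diag(∏_{j ≠ i} (X - λⱼ)) Wᵀ`. The characteristic polynomial of `T(2:n,2:n)` is the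
`(0,0)` cofactor of `X - T`, i.e. `∑ᵢ W₀ᵢ² ∏_{j ≠ i} (X - λⱼ)`; as all `W₀ᵢ²` equal the reciprocal
of the size of `T`, this is `p'` divided by that size.
-/

open Polynomial Matrix

namespace Matrix

variable {n R : Type*} [Fintype n] [DecidableEq n] [CommRing R]

lemma eq_mul_mul_transpose_of_transpose_mul_mul_eq {U A D : Matrix n n R} (hU : Uᵀ * U = 1)
    (hD : Uᵀ * A * U = D) : A = U * D * Uᵀ := by
  have hU' : U * Uᵀ = 1 := mul_eq_one_comm.mp hU
  rw [← hD, Matrix.mul_assoc, Matrix.mul_assoc, hU', Matrix.mul_one, ← Matrix.mul_assoc, hU',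
    Matrix.one_mul]

lemma transpose_map_mul_map_eq_one {S : Type*} [CommRing S] {U : Matrix n n R} (hU : Uᵀ * U = 1)
    (f : R →+* S) : (U.map f)ᵀ * U.map f = 1 := by
  rw [← transpose_map, ← Matrix.map_mul, hU, Matrix.map_one _ (map_zero f) (map_one f)]

lemma charpoly_mul_mul_transpose {U : Matrix n n R} (hU : Uᵀ * U = 1) (A : Matrix n n R) :
    (U * A * Uᵀ).charpoly = A.charpoly := by
  rw [charpoly_mul_comm, ← Matrix.mul_assoc, hU, Matrix.one_mul]

lemma adjugate_eq_det_smul_transpose {U : Matrix n n R} (hU : Uᵀ * U = 1) :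
    adjugate U = U.det • Uᵀ := by
  calc adjugate U = Uᵀ * U * adjugate U := by rw [hU, Matrix.one_mul]
    _ = U.det • Uᵀ := by rw [Matrix.mul_assoc, mul_adjugate, Matrix.mul_smul, Matrix.mul_one]

lemma adjugate_mul_mul_transpose {U : Matrix n n R} (hU : Uᵀ * U = 1) (A : Matrix n n R) :
    adjugate (U * A * Uᵀ) = U * adjugate A * Uᵀ := by
  have hU' : Uᵀᵀ * Uᵀ = 1 := by rw [transpose_transpose]; exact mul_eq_one_comm.mp hU
  have hdet : Uᵀ.det * U.det = 1 := by rw [← det_mul, hU, det_one]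
  rw [adjugate_mul_distrib, adjugate_mul_distrib, adjugate_eq_det_smul_transpose hU,
    adjugate_eq_det_smul_transpose hU', transpose_transpose]
  simp only [Matrix.smul_mul, Matrix.mul_smul, smul_smul, Matrix.mul_assoc]
  rw [mul_comm, hdet, one_smul]

lemma charmatrix_mul_mul_transpose {U : Matrix n n R} (hU : Uᵀ * U = 1) (A : Matrix n n R) :
    charmatrix (U * A * Uᵀ) = U.map C * charmatrix A * (U.map C)ᵀ := by
  have hU' : U.map C * (U.map C)ᵀ = 1 := mul_eq_one_comm.mp (transpose_map_mul_map_eq_one hU C)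
  rw [charmatrix, charmatrix, Matrix.mul_sub, Matrix.sub_mul]
  congr 1
  · rw [← (scalar_commute (X : R[X]) (fun _ => Commute.all _ _) (U.map C)).eq,
      Matrix.mul_assoc, hU', Matrix.mul_one]
  · simp only [RingHom.mapMatrix_apply, Matrix.map_mul, transpose_map]

lemma mul_diagonal_mul_transpose_apply (U : Matrix n n R) (d : n → R) (k : n) :
    (U * diagonal d * Uᵀ) k k = ∑ i, U k i ^ 2 * d i := by
  rw [mul_apply]
  simp only [mul_diagonal, transpose_apply]
  exact Finset.sum_congr rfl fun i _ => by ring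

lemma charpoly_submatrix_succ_eq_adjugate_charmatrix {m : ℕ}
    (M : Matrix (Fin (m + 1)) (Fin (m + 1)) R) :
    (M.submatrix Fin.succ Fin.succ).charpoly = adjugate (charmatrix M) 0 0 := by
  have hsub : charmatrix (M.submatrix Fin.succ Fin.succ) =
      (charmatrix M).submatrix Fin.succ Fin.succ := by
    ext i j : 1
    simp [charmatrix_apply, diagonal_apply]
  rw [adjugate_fin_succ_eq_det_submatrix, charpoly, hsub]
  simp

end Matrix

theorem stmt15_general (n : ℕ)
    (lam : Fin (n + 1) → ℝ)
    (T W : Matrix (Fin (n + 1)) (Fin (n + 1)) ℝ)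
    (hW : Wᵀ * W = 1) (hTW : Wᵀ * T * W = Matrix.diagonal lam)
    (hrow : ∀ j, W 0 j = 1 / Real.sqrt (n + 1)) :
    T.charpoly = ∏ i : Fin (n + 1), (X - C (lam i)) ∧
    (T.submatrix Fin.succ Fin.succ).charpoly =
      ((n + 1 : ℝ))⁻¹ • derivative (∏ i : Fin (n + 1), (X - C (lam i))) := by
  have hT := eq_mul_mul_transpose_of_transpose_mul_mul_eq hW hTW
  refine ⟨by rw [hT, charpoly_mul_mul_transpose hW, charpoly_diagonal], ?_⟩
  have hrow_sq : ∀ i, (W.map C) 0 i ^ 2 = C ((n + 1 : ℝ)⁻¹) := fun i => by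
    rw [map_apply, ← C_pow, hrow, div_pow, Real.sq_sqrt (by positivity), one_pow, one_div]
  rw [charpoly_submatrix_succ_eq_adjugate_charmatrix, hT, charmatrix_mul_mul_transpose hW,
    adjugate_mul_mul_transpose (transpose_map_mul_map_eq_one hW C), charmatrix_diagonal,
    adjugate_diagonal,
    mul_diagonal_mul_transpose_apply, derivative_prod_finset, smul_eq_C_mul, Finset.mul_sum]
  simp only [hrow_sq, derivative_X_sub_C, mul_one]

theorem stmt15 (n : ℕ)
    (lam : Fin (n + 1) → ℝ) (hmono : StrictMono lam)
    (T W : Matrix (Fin (n + 1)) (Fin (n + 1)) ℝ)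
    (hTsymm : T.IsSymm)
    (hTtri : ∀ i j : Fin (n + 1), (i : ℕ) + 2 ≤ (j : ℕ) → T i j = 0)
    (hTunred : ∀ i j : Fin (n + 1), (i : ℕ) = (j : ℕ) + 1 → T i j ≠ 0)
    (hW : Wᵀ * W = 1) (hTW : Wᵀ * T * W = Matrix.diagonal lam)
    (hrow : ∀ j, W 0 j = 1 / Real.sqrt (n + 1)) :
    T.charpoly = ∏ i : Fin (n + 1), (X - C (lam i)) ∧
    (T.submatrix Fin.succ Fin.succ).charpoly =
      ((n + 1 : ℝ))⁻¹ • derivative (∏ i : Fin (n + 1), (X - C (lam i))) :=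
  stmt15_general n lam T W hW hTW hrow
end
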